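/- arXiv:2007.01290 — 2 statements merged into one kernel-verified Lean document; each statement's English description precedes it below -/
import Mathlib

section
/- Error of local linearization of two-layer ReLU networks (Lemma 1): Assume d ≥ 3 and the random initialization of Assumption 1. Then there exists a constant C depending only on c and d such that for every random element W of (ℝ^d)^m that is measurable with respect to the initialization and satisfies W ∈ S_B almost surely, one has E_{init,X}[ |f(X; W) − f̂(X; W)|² ] ≤ C B³ m^{−1/2} and E_{init,X}[ ‖∇_W f(X; W) − ∇_W f(X; W(0))‖² ] ≤ C B m^{−1/2}. -/
noncomputable section

open MeasureTheory ProbabilityTheory Finset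

/-- Euclidean space of inputs. -/
abbrev Vec (d : ℕ) := EuclideanSpace ℝ (Fin d)

/-- Weight space of a width-`m` two-layer network (ℓ² norm of the concatenation). -/
abbrev Wt (m d : ℕ) := EuclideanSpace ℝ (Fin m × Fin d)

/-- Preactivation `W_rᵀ x` of neuron `r`. -/
def npre {m d : ℕ} (W : Wt m d) (x : Vec d) (r : Fin m) : ℝ := ∑ i, W (r, i) * x i

/-- Two-layer ReLU network `f(x; W) = m^{-1/2} Σ_r s_r max(W_rᵀ x, 0)`. -/
def net {m d : ℕ} (s : Fin m → ℝ) (W : Wt m d) (x : Vec d) : ℝ :=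
  (Real.sqrt m)⁻¹ * ∑ r, s r * max (npre W x r) 0

/-- Formal gradient of the network: block `r` is `m^{-1/2} s_r 1{W_rᵀ x > 0} x`. -/
def netGrad {m d : ℕ} (s : Fin m → ℝ) (W : Wt m d) (x : Vec d) : Wt m d :=
  WithLp.toLp 2 (fun p => (Real.sqrt m)⁻¹ * s p.1 * (if 0 < npre W x p.1 then x p.2 else 0))

/-- Linearization at `W(0)`: `f̂(x;W) = f(x;W(0)) + ⟨∇_W f(x;W(0)), W − W(0)⟩`. -/
def netLin {m d : ℕ} (s : Fin m → ℝ) (W0 W : Wt m d) (x : Vec d) : ℝ :=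
  net s W0 x + ∑ p : Fin m × Fin d, netGrad s W0 x p * (W p - W0 p)

open Filter Topology
open scoped ENNReal NNReal RealInnerProductSpace

/-!
Write `a_r = W_r(0)ᵀx` and `T_r = ‖W_r - W_r(0)‖`, so that `|(W_r - W_r(0))ᵀx| ≤ T_r`. Neuron `r`
contributes to the linearization error (resp. to the gradient difference) only if its activation
can flip, i.e. `|a_r| ≤ T_r`, and then by at most `T_r` (resp. `1`); by Cauchy–Schwarz the two
squared errors are at most `B²/m` (resp. `1/m`) times the number of such neurons.

Given the initialization, `X` is still anti-concentrated (it is independent of the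
initialization, and `W` is a function of it), so `P(|a_r| ≤ T_r) ≤ c T_r / ‖W_r(0)‖`. Young's
inequality together with `Σ_r T_r² ≤ B²` bounds the expected number of flippable neurons by
`c B √m (1 + K) / 2`, where `K` bounds `E ‖W_r(0)‖⁻²`. For `d ≥ 3` such a `K` exists: by AM–GM,
`‖w‖⁻² ≤ d⁻¹ ∏_i |w_i|^(-2/d)`, the coordinates are independent, and `E |g|^(-2/d)` is finite for
a one-dimensional Gaussian because `2/d < 1`.
-/

lemma abs_relu_add_sub_relu_sub_le {a δ t : ℝ} (h : |δ| ≤ t) :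
    |max (a + δ) 0 - max a 0 - (if 0 < a then δ else 0)| ≤ t * if |a| ≤ t then 1 else 0 := by
  rw [abs_le] at h
  split_ifs <;> simp only [mul_one, mul_zero, abs_le, max_def] at * <;> split_ifs <;> grind

lemma sq_heaviside_add_sub_heaviside_le {a δ t : ℝ} (h : |δ| ≤ t) :
    ((if 0 < a + δ then (1 : ℝ) else 0) - if 0 < a then 1 else 0) ^ 2 ≤
      if |a| ≤ t then 1 else 0 := by
  rw [abs_le] at h
  split_ifs <;> simp only [abs_le] at * <;> grind

lemma sum_div_le_of_sum_sq_le {ι : Type*} (s : Finset ι) {T N : ι → ℝ} {a B : ℝ} (ha : 0 < a)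
    (hT : ∑ i ∈ s, T i ^ 2 ≤ B ^ 2) :
    ∑ i ∈ s, T i / N i ≤ a * B ^ 2 / 2 + (2 * a)⁻¹ * ∑ i ∈ s, (N i ^ 2)⁻¹ := by
  have hyoung : ∀ i, T i / N i ≤ a / 2 * T i ^ 2 + (2 * a)⁻¹ * (N i ^ 2)⁻¹ := by
    intro i
    have key : a / 2 * T i ^ 2 + (2 * a)⁻¹ * (N i ^ 2)⁻¹ - T i / N i =
        (2 * a)⁻¹ * (a * T i - (N i)⁻¹) ^ 2 := by
      field_simp
      ring
    linarith [mul_nonneg (inv_nonneg.mpr (by positivity : (0 : ℝ) ≤ 2 * a))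
      (sq_nonneg (a * T i - (N i)⁻¹))]
  calc ∑ i ∈ s, T i / N i ≤ ∑ i ∈ s, (a / 2 * T i ^ 2 + (2 * a)⁻¹ * (N i ^ 2)⁻¹) :=
        Finset.sum_le_sum fun i _ => hyoung i
    _ ≤ a / 2 * B ^ 2 + (2 * a)⁻¹ * ∑ i ∈ s, (N i ^ 2)⁻¹ := by
        rw [Finset.sum_add_distrib, ← Finset.mul_sum, ← Finset.mul_sum]
        gcongr
    _ = _ := by ring

lemma inv_sum_sq_le_prod_rpow {ι : Type*} [Fintype ι] {y : ι → ℝ} (hy : ∀ i, y i ≠ 0) :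
    (∑ i, y i ^ 2)⁻¹ ≤
      (Fintype.card ι : ℝ)⁻¹ * ∏ i, (y i ^ 2) ^ (-(Fintype.card ι : ℝ)⁻¹) := by
  set n : ℝ := (Fintype.card ι : ℝ)
  rcases isEmpty_or_nonempty ι with hι | hι
  · simp [n]
  have hn : 0 < n := Nat.cast_pos.mpr Fintype.card_pos
  have hG : 0 < ∏ i, (y i ^ 2) ^ n⁻¹ :=
    Finset.prod_pos fun i _ => Real.rpow_pos_of_pos (even_two.pow_pos (hy i)) _
  have hamgm : ∏ i, (y i ^ 2) ^ n⁻¹ ≤ n⁻¹ * ∑ i, y i ^ 2 := by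
    rw [Finset.mul_sum]
    refine Real.geom_mean_le_arith_mean_weighted _ _ _ (fun i _ => by positivity) ?_
      (fun i _ => sq_nonneg _)
    simp [n, hn.ne']
  calc (∑ i, y i ^ 2)⁻¹ ≤ (n * ∏ i, (y i ^ 2) ^ n⁻¹)⁻¹ := by
        refine inv_anti₀ (by positivity) ?_
        exact (le_inv_mul_iff₀ hn).mp hamgm
    _ = n⁻¹ * ∏ i, (y i ^ 2) ^ (-n⁻¹) := by
        rw [mul_inv, ← Finset.prod_inv_distrib]
        simp only [Real.rpow_neg (sq_nonneg _)]

section Network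

variable {m d : ℕ}

lemma inner_eq_sum_mul (x v : Vec d) : ⟪x, v⟫ = ∑ i, v i * x i := by
  simp [PiLp.inner_apply]

def row (W : Wt m d) (r : Fin m) : Vec d := WithLp.toLp 2 fun i => W (r, i)

lemma npre_eq_inner (W : Wt m d) (x : Vec d) (r : Fin m) : npre W x r = ⟪x, row W r⟫ := by
  simp [npre, row, inner_eq_sum_mul]

lemma npre_sub_npre (W0 W : Wt m d) (x : Vec d) (r : Fin m) :
    npre W x r - npre W0 x r = ⟪x, row (W - W0) r⟫ := by
  simp only [npre, row, PiLp.inner_apply, ← Finset.sum_sub_distrib]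
  simp [sub_mul]

lemma sum_norm_row_sq (W : Wt m d) : ∑ r, ‖row W r‖ ^ 2 = ‖W‖ ^ 2 := by
  simp [row, EuclideanSpace.norm_sq_eq, Fintype.sum_prod_type]

lemma continuous_row (r : Fin m) : Continuous fun W : Wt m d => row W r := by
  unfold row; fun_prop

lemma continuous_npre (r : Fin m) : Continuous fun q : Wt m d × Vec d => npre q.1 q.2 r := by
  unfold npre; fun_prop

lemma abs_npre_sub_npre_le (W0 W : Wt m d) {x : Vec d} (hx : ‖x‖ ≤ 1) (r : Fin m) :
    |npre W x r - npre W0 x r| ≤ ‖row (W - W0) r‖ := by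
  rw [npre_sub_npre]
  exact (abs_real_inner_le_norm _ _).trans (mul_le_of_le_one_left (norm_nonneg _) hx)

def flipCount (W0 W : Wt m d) (x : Vec d) : ℝ :=
  ∑ r, if |npre W0 x r| ≤ ‖row (W - W0) r‖ then 1 else 0

lemma flipCount_nonneg (W0 W : Wt m d) (x : Vec d) : 0 ≤ flipCount W0 W x :=
  Finset.sum_nonneg fun r _ => by split_ifs <;> norm_num

lemma net_sub_netLin (s : Fin m → ℝ) (W0 W : Wt m d) (x : Vec d) :
    net s W x - netLin s W0 W x = (√m)⁻¹ * ∑ r, s r *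
      (max (npre W x r) 0 - max (npre W0 x r) 0 -
        if 0 < npre W0 x r then npre W x r - npre W0 x r else 0) := by
  have hrow : ∀ r, ∑ i, netGrad s W0 x (r, i) * (W (r, i) - W0 (r, i)) =
      (√m)⁻¹ * (s r * if 0 < npre W0 x r then npre W x r - npre W0 x r else 0) := by
    intro r
    split_ifs with h
    · simp only [netGrad, PiLp.toLp_apply, if_pos h]
      simp only [npre, ← Finset.sum_sub_distrib, Finset.mul_sum]
      exact Finset.sum_congr rfl fun i _ => by ring
    · simp [netGrad, *]
  rw [netLin, net, net, Fintype.sum_prod_type]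
  simp only [hrow, ← Finset.mul_sum]
  simp only [mul_sub, Finset.sum_sub_distrib]
  ring

lemma sq_net_sub_netLin_le {s : Fin m → ℝ} (hs : ∀ r, |s r| ≤ 1) (W0 W : Wt m d) {x : Vec d}
    (hx : ‖x‖ ≤ 1) :
    (net s W x - netLin s W0 W x) ^ 2 ≤ (m : ℝ)⁻¹ * ‖W - W0‖ ^ 2 * flipCount W0 W x := by
  set χ : Fin m → ℝ := fun r => if |npre W0 x r| ≤ ‖row (W - W0) r‖ then 1 else 0
  have hterm : ∀ r, |s r * (max (npre W x r) 0 - max (npre W0 x r) 0 -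
      if 0 < npre W0 x r then npre W x r - npre W0 x r else 0)| ≤ ‖row (W - W0) r‖ * χ r := by
    intro r
    have h := abs_relu_add_sub_relu_sub_le (a := npre W0 x r) (abs_npre_sub_npre_le W0 W hx r)
    rw [add_sub_cancel] at h
    rw [abs_mul]
    exact (mul_le_of_le_one_left (abs_nonneg _) (hs r)).trans h
  have hχ : ∑ r, χ r ^ 2 = flipCount W0 W x :=
    Finset.sum_congr rfl fun r _ => by simp only [χ]; split_ifs <;> norm_num
  rw [net_sub_netLin, mul_pow, inv_pow, Real.sq_sqrt (Nat.cast_nonneg m), mul_assoc]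
  gcongr
  calc _ ≤ (∑ r, ‖row (W - W0) r‖ * χ r) ^ 2 := by
        rw [← sq_abs]
        gcongr
        exact (Finset.abs_sum_le_sum_abs _ _).trans (Finset.sum_le_sum fun r _ => hterm r)
    _ ≤ (∑ r, ‖row (W - W0) r‖ ^ 2) * ∑ r, χ r ^ 2 := Finset.sum_mul_sq_le_sq_mul_sq _ _ _
    _ = ‖W - W0‖ ^ 2 * flipCount W0 W x := by rw [sum_norm_row_sq, hχ]

lemma sum_sq_netGrad_sub_le {s : Fin m → ℝ} (hs : ∀ r, |s r| ≤ 1) (W0 W : Wt m d) {x : Vec d}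
    (hx : ‖x‖ ≤ 1) :
    ∑ p, (netGrad s W x p - netGrad s W0 x p) ^ 2 ≤ (m : ℝ)⁻¹ * flipCount W0 W x := by
  rw [flipCount, Finset.mul_sum, Fintype.sum_prod_type]
  refine Finset.sum_le_sum fun r _ => ?_
  have hjump := sq_heaviside_add_sub_heaviside_le (a := npre W0 x r)
    (abs_npre_sub_npre_le W0 W hx r)
  rw [add_sub_cancel] at hjump
  have hs2 : s r ^ 2 ≤ 1 := by rw [← sq_abs]; exact pow_le_one₀ (abs_nonneg _) (hs r)
  have hx2 : ∑ i, x i ^ 2 ≤ 1 := by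
    rw [← EuclideanSpace.real_norm_sq_eq]; exact pow_le_one₀ (norm_nonneg _) hx
  calc ∑ i, (netGrad s W x (r, i) - netGrad s W0 x (r, i)) ^ 2
      = (m : ℝ)⁻¹ * s r ^ 2 *
          ((if 0 < npre W x r then (1 : ℝ) else 0) - if 0 < npre W0 x r then 1 else 0) ^ 2 *
          ∑ i, x i ^ 2 := by
        rw [Finset.mul_sum]
        refine Finset.sum_congr rfl fun i _ => ?_
        simp only [netGrad, PiLp.toLp_apply]
        rw [show (m : ℝ)⁻¹ = (√m)⁻¹ ^ 2 by rw [inv_pow, Real.sq_sqrt (Nat.cast_nonneg m)]]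
        split_ifs <;> ring
    _ ≤ (m : ℝ)⁻¹ * 1 * (if |npre W0 x r| ≤ ‖row (W - W0) r‖ then 1 else 0) * 1 := by
        gcongr
    _ = _ := by ring

lemma sum_div_norm_row_le {W0 W : Wt m d} {B a : ℝ} (hWB : ‖W - W0‖ ≤ B) (ha : 0 < a) :
    ∑ r, ‖row (W - W0) r‖ / ‖row W0 r‖ ≤
      a * B ^ 2 / 2 + (2 * a)⁻¹ * ∑ r, (‖row W0 r‖ ^ 2)⁻¹ := by
  refine sum_div_le_of_sum_sq_le _ ha ?_
  rw [sum_norm_row_sq]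
  gcongr

end Network

section Gaussian

variable {Ω : Type*} [MeasurableSpace Ω] {P : Measure Ω} {μ : ℝ} {v : ℝ≥0}

lemma gaussianPDF_le (u : ℝ) :
    gaussianPDF μ v u ≤ ENNReal.ofReal (√(2 * Real.pi * v))⁻¹ := by
  refine ENNReal.ofReal_le_ofReal ?_
  rw [gaussianPDFReal_def]
  refine mul_le_of_le_one_right (by positivity) (Real.exp_le_one_iff.mpr ?_)
  exact div_nonpos_of_nonpos_of_nonneg (neg_nonpos.mpr (sq_nonneg _)) (by positivity)

lemma locallyIntegrable_rpow_sq {q : ℝ} (hq : -(1 / 2) < q) :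
    LocallyIntegrable (fun u : ℝ => (u ^ 2) ^ q) volume := by
  have hmeas : Measurable fun u : ℝ => (u ^ 2) ^ q := by fun_prop
  refine locallyIntegrable_of_norm_le_rpow (C := 1) (α := -(2 * q)) (by simp) (by simp; linarith)
    (ae_of_all _ fun u => ?_) hmeas.aestronglyMeasurable
  rw [neg_neg, one_mul, Real.norm_eq_abs, Real.norm_eq_abs, abs_of_nonneg (by positivity),
    ← sq_abs u, ← Real.rpow_natCast_mul (abs_nonneg u)]
  norm_num

lemma lintegral_rpow_sq_gaussianReal_lt_top (hv : v ≠ 0) {q : ℝ} (hq : -(1 / 2) < q)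
    (hq0 : q ≤ 0) : ∫⁻ u, ENNReal.ofReal ((u ^ 2) ^ q) ∂gaussianReal μ v < ⊤ := by
  set f : ℝ → ℝ := fun u => (u ^ 2) ^ q
  have hf : Measurable fun u => ENNReal.ofReal (f u) := by fun_prop
  have hball : ∫⁻ u in Metric.closedBall 0 1, ENNReal.ofReal (f u) < ⊤ :=
    ((locallyIntegrable_rpow_sq hq).integrableOn_isCompact
      (isCompact_closedBall 0 1)).lintegral_lt_top
  have hpt : ∀ u, gaussianPDF μ v u * ENNReal.ofReal (f u) ≤
      ENNReal.ofReal (√(2 * Real.pi * v))⁻¹ *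
        (Metric.closedBall 0 1).indicator (fun u => ENNReal.ofReal (f u)) u +
        gaussianPDF μ v u := by
    intro u
    by_cases hu : u ∈ Metric.closedBall (0 : ℝ) 1
    · rw [Set.indicator_of_mem hu]
      exact le_add_right (mul_le_mul_left (gaussianPDF_le u) _)
    · have h1 : 1 ≤ u ^ 2 := by
        rw [Metric.mem_closedBall, dist_zero_right, Real.norm_eq_abs, not_le] at hu
        nlinarith [sq_abs u, abs_nonneg u]
      have hf1 : ENNReal.ofReal (f u) ≤ 1 :=
        ENNReal.ofReal_le_one.mpr (Real.rpow_le_one_of_one_le_of_nonpos h1 hq0)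
      rw [Set.indicator_of_notMem hu, mul_zero, zero_add]
      exact mul_le_of_le_one_right' hf1
  rw [gaussianReal_of_var_ne_zero _ hv,
    lintegral_withDensity_eq_lintegral_mul _ (measurable_gaussianPDF μ v) hf]
  calc ∫⁻ u, (gaussianPDF μ v * fun u => ENNReal.ofReal (f u)) u
      ≤ ∫⁻ u, ENNReal.ofReal (√(2 * Real.pi * v))⁻¹ *
          (Metric.closedBall 0 1).indicator (fun u => ENNReal.ofReal (f u)) u +
          gaussianPDF μ v u := lintegral_mono hpt
    _ = ENNReal.ofReal (√(2 * Real.pi * v))⁻¹ *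
          (∫⁻ u in Metric.closedBall 0 1, ENNReal.ofReal (f u)) + 1 := by
        rw [lintegral_add_right _ (measurable_gaussianPDF μ v),
          lintegral_const_mul _ (hf.indicator measurableSet_closedBall),
          lintegral_indicator measurableSet_closedBall, lintegral_gaussianPDF_eq_one μ hv]
    _ < ⊤ := by finiteness

lemma ae_ne_of_map_eq_gaussianReal {Y : Ω → ℝ} (hY : AEMeasurable Y P) (hv : v ≠ 0)
    (hlaw : P.map Y = gaussianReal μ v) (a : ℝ) : ∀ᵐ ω ∂P, Y ω ≠ a := by
  have := nullSingletonClass_gaussianReal (μ := μ) hv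
  refine ae_of_ae_map (p := (· ≠ a)) hY ?_
  rw [hlaw, ae_iff]
  simp

def invSqMomentBound (n : ℕ) (μ : ℝ) (v : ℝ≥0) : ℝ≥0∞ :=
  ENNReal.ofReal (n : ℝ)⁻¹ * (∫⁻ u, ENNReal.ofReal ((u ^ 2) ^ (-(n : ℝ)⁻¹)) ∂gaussianReal μ v) ^ n

lemma invSqMomentBound_ne_top {n : ℕ} (hn : 3 ≤ n) (hv : v ≠ 0) : invSqMomentBound n μ v ≠ ⊤ := by
  have hn' : (3 : ℝ) ≤ n := by exact_mod_cast hn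
  have hq : -(1 / 2 : ℝ) < -(n : ℝ)⁻¹ := by
    rw [neg_lt_neg_iff, inv_lt_comm₀ (by positivity) (by norm_num)]
    linarith
  exact ENNReal.mul_ne_top ENNReal.ofReal_ne_top <| ENNReal.pow_ne_top <|
    (lintegral_rpow_sq_gaussianReal_lt_top hv hq (by simp)).ne

lemma lintegral_inv_sum_sq_le {ι : Type*} [Fintype ι] {Y : ι → Ω → ℝ}
    (hY : ∀ i, Measurable (Y i)) (hind : iIndepFun Y P) (hv : v ≠ 0)
    (hlaw : ∀ i, P.map (Y i) = gaussianReal μ v) :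
    ∫⁻ ω, ENNReal.ofReal (∑ i, Y i ω ^ 2)⁻¹ ∂P ≤ invSqMomentBound (Fintype.card ι) μ v := by
  set φ : ℝ → ℝ≥0∞ := fun u => ENNReal.ofReal ((u ^ 2) ^ (-(Fintype.card ι : ℝ)⁻¹))
  have hφ : Measurable φ := by fun_prop
  have hne : ∀ᵐ ω ∂P, ∀ i, Y i ω ≠ 0 :=
    ae_all_iff.mpr fun i => ae_ne_of_map_eq_gaussianReal (hY i).aemeasurable hv (hlaw i) 0
  calc ∫⁻ ω, ENNReal.ofReal (∑ i, Y i ω ^ 2)⁻¹ ∂P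
      ≤ ∫⁻ ω, ENNReal.ofReal (Fintype.card ι : ℝ)⁻¹ * ∏ i, φ (Y i ω) ∂P := by
        refine lintegral_mono_ae (hne.mono fun ω hω => ?_)
        rw [← ENNReal.ofReal_prod_of_nonneg (fun i _ => by positivity),
          ← ENNReal.ofReal_mul (by positivity)]
        exact ENNReal.ofReal_le_ofReal (inv_sum_sq_le_prod_rpow hω)
    _ = ENNReal.ofReal (Fintype.card ι : ℝ)⁻¹ * ∏ i, ∫⁻ ω, φ (Y i ω) ∂P := by
        have hprod : Measurable fun ω => ∏ i, φ (Y i ω) :=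
          Finset.measurable_prod _ fun i _ => hφ.comp (hY i)
        rw [lintegral_const_mul _ hprod]
        exact congrArg _ (lintegral_prod_eq_prod_lintegral_of_indepFun _ _
          (hind.comp (fun _ => φ) fun _ => hφ) fun i => hφ.comp (hY i))
    _ = _ := by
        simp_rw [← lintegral_map hφ (hY _), hlaw, Finset.prod_const, Finset.card_univ]
        rfl

end Gaussian

section AntiConcentration

variable {Ω : Type*} [MeasurableSpace Ω] {P : Measure Ω} {d : ℕ} {X : Ω → Vec d} {c : ℝ}

lemma measure_abs_inner_le_le
    (hanti : ∀ v : Vec d, ‖v‖ = 1 → ∀ ζ : ℝ, 0 < ζ →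
      P {ω | |⟪X ω, v⟫| ≤ ζ} ≤ ENNReal.ofReal (c * ζ))
    {u : Vec d} (hu : u ≠ 0) (t : ℝ) :
    P {ω | |⟪X ω, u⟫| ≤ t} ≤ ENNReal.ofReal (c * t / ‖u‖) := by
  rcases lt_or_ge t 0 with ht | ht
  · have hempty : {ω | |⟪X ω, u⟫| ≤ t} = ∅ :=
      Set.eq_empty_of_forall_notMem fun ω hω => ((abs_nonneg _).trans hω).not_gt ht
    simp [hempty]
  have hu' : 0 < ‖u‖ := norm_pos_iff.mpr hu
  have hbound : ∀ ζ ∈ Set.Ioi t, P {ω | |⟪X ω, u⟫| ≤ t} ≤ ENNReal.ofReal (c * ζ / ‖u‖) := by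
    intro ζ hζ
    calc P {ω | |⟪X ω, u⟫| ≤ t} ≤ P {ω | |⟪X ω, ‖u‖⁻¹ • u⟫| ≤ ζ / ‖u‖} := by
          refine measure_mono fun ω hω => ?_
          simp only [Set.mem_ofPred_eq, real_inner_smul_right, inv_mul_eq_div, abs_div,
            abs_norm] at hω ⊢
          exact div_le_div_of_nonneg_right (hω.trans (le_of_lt hζ)) hu'.le
      _ ≤ ENNReal.ofReal (c * (ζ / ‖u‖)) :=
          hanti _ (norm_smul_inv_norm hu) _ (div_pos (ht.trans_lt hζ) hu')
      _ = ENNReal.ofReal (c * ζ / ‖u‖) := by rw [mul_div_assoc]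
  -- `hanti` only covers `ζ > 0`, so the case `t = 0` needs `ζ ↓ t`
  have hlim : Tendsto (fun ζ => ENNReal.ofReal (c * ζ / ‖u‖)) (𝓝[>] t)
      (𝓝 (ENNReal.ofReal (c * t / ‖u‖))) :=
    ((ENNReal.continuous_ofReal.comp (by fun_prop)).tendsto t).mono_left nhdsWithin_le_nhds
  exact ge_of_tendsto hlim (eventually_nhdsWithin_of_forall hbound)

lemma measure_abs_inner_le_le_lintegral [IsFiniteMeasure P] {E : Type*} [MeasurableSpace E]
    {Y : Ω → E} (hY : Measurable Y) (hX : Measurable X) (hind : IndepFun Y X P)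
    {u : E → Vec d} {t : E → ℝ} (hu : Measurable u) (ht : Measurable t)
    (hu0 : ∀ᵐ ω ∂P, u (Y ω) ≠ 0)
    (hanti : ∀ v : Vec d, ‖v‖ = 1 → ∀ ζ : ℝ, 0 < ζ →
      P {ω | |⟪X ω, v⟫| ≤ ζ} ≤ ENNReal.ofReal (c * ζ)) :
    P {ω | |⟪X ω, u (Y ω)⟫| ≤ t (Y ω)} ≤ ∫⁻ ω, ENNReal.ofReal (c * t (Y ω) / ‖u (Y ω)‖) ∂P := by
  set S := {q : E × Vec d | |⟪q.2, u q.1⟫| ≤ t q.1}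
  have hS : MeasurableSet S :=
    measurableSet_le (measurable_snd.inner (hu.comp measurable_fst)).abs (ht.comp measurable_fst)
  have hg : Measurable fun y => ENNReal.ofReal (c * t y / ‖u y‖) := by fun_prop
  have hu0' : ∀ᵐ y ∂P.map Y, u y ≠ 0 :=
    (ae_map_iff hY.aemeasurable (hu (measurableSet_singleton 0).compl)).mpr hu0
  calc P {ω | |⟪X ω, u (Y ω)⟫| ≤ t (Y ω)} = P.map (fun ω => (Y ω, X ω)) S :=
        (Measure.map_apply (hY.prodMk hX) hS).symm
    _ = ∫⁻ y, P.map X (Prod.mk y ⁻¹' S) ∂P.map Y := by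
        rw [hind.map_prod_eq_prod_map_map hY.aemeasurable hX.aemeasurable, Measure.prod_apply hS]
    _ ≤ ∫⁻ y, ENNReal.ofReal (c * t y / ‖u y‖) ∂P.map Y := by
        refine lintegral_mono_ae (hu0'.mono fun y hy => ?_)
        rw [Measure.map_apply hX (measurable_prodMk_left hS)]
        exact measure_abs_inner_le_le hanti hy (t y)
    _ = ∫⁻ ω, ENNReal.ofReal (c * t (Y ω) / ‖u (Y ω)‖) ∂P := lintegral_map hg hY

end AntiConcentration

lemma ProbabilityTheory.IndepFun.of_measurable_comap {Ω β γ δ : Type*} [MeasurableSpace Ω]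
    [mβ : MeasurableSpace β] [MeasurableSpace γ] [MeasurableSpace δ] {P : Measure Ω}
    {Y : Ω → β} {Z : Ω → γ} {X : Ω → δ} (h : IndepFun Y X P)
    (hZ : Measurable[MeasurableSpace.comap Y mβ] Z) : IndepFun Z X P := by
  rw [IndepFun_iff_Indep] at h ⊢
  exact indep_of_indep_of_le_left h (measurable_iff_comap_le.mp hZ)

lemma flipCount_eq_sum_indicator {Ω : Type*} {m d : ℕ} (W0 W : Ω → Wt m d) (X : Ω → Vec d)
    (ω : Ω) :
    flipCount (W0 ω) (W ω) (X ω) =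
      ∑ r, {ω | |npre (W0 ω) (X ω) r| ≤ ‖row (W ω - W0 ω) r‖}.indicator 1 ω := by
  simp [flipCount, Set.indicator_apply]

lemma integral_le_mul_of_ae_le_mul {Ω : Type*} [MeasurableSpace Ω] {P : Measure Ω}
    {f g : Ω → ℝ} {a G : ℝ} (hf : ∀ᵐ ω ∂P, 0 ≤ f ω) (hg : Integrable g P) (ha : 0 ≤ a)
    (hfg : ∀ᵐ ω ∂P, f ω ≤ a * g ω) (hG : ∫ ω, g ω ∂P ≤ G) : ∫ ω, f ω ∂P ≤ a * G :=
  (integral_mono_of_nonneg hf (hg.const_mul a) hfg).trans <| by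
    rw [integral_const_mul]
    exact mul_le_mul_of_nonneg_left hG ha

section RandomNetwork

variable {Ω : Type*} [MeasurableSpace Ω] {P : Measure Ω} {m d : ℕ} {W0 W : Ω → Wt m d}
  {X : Ω → Vec d} {c K B μ : ℝ} {v : ℝ≥0}

lemma measurableSet_flip (hW0 : Measurable W0) (hW : Measurable W) (hX : Measurable X)
    (r : Fin m) : MeasurableSet {ω | |npre (W0 ω) (X ω) r| ≤ ‖row (W ω - W0 ω) r‖} :=
  measurableSet_le ((continuous_npre r).measurable.comp (hW0.prodMk hX)).abs
    ((continuous_row r).measurable.comp (hW.sub hW0)).norm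

lemma integrable_flipCount [IsFiniteMeasure P] (hW0 : Measurable W0) (hW : Measurable W)
    (hX : Measurable X) : Integrable (fun ω => flipCount (W0 ω) (W ω) (X ω)) P := by
  simp_rw [flipCount_eq_sum_indicator]
  exact integrable_finsetSum _ fun r _ =>
    (integrable_const 1).indicator (measurableSet_flip hW0 hW hX r)

lemma integral_flipCount [IsFiniteMeasure P] (hW0 : Measurable W0) (hW : Measurable W)
    (hX : Measurable X) :
    ∫ ω, flipCount (W0 ω) (W ω) (X ω) ∂P =
      (∑ r, P {ω | |npre (W0 ω) (X ω) r| ≤ ‖row (W ω - W0 ω) r‖}).toReal := by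
  simp_rw [flipCount_eq_sum_indicator]
  rw [integral_finsetSum _ fun r _ =>
    (integrable_const 1).indicator (measurableSet_flip hW0 hW hX r),
    ENNReal.toReal_sum fun r _ => measure_ne_top _ _]
  exact Finset.sum_congr rfl fun r _ => integral_indicator_one (measurableSet_flip hW0 hW hX r)

lemma lintegral_sum_div_norm_row_le [IsProbabilityMeasure P] (hW0 : Measurable W0)
    (hK0 : 0 ≤ K)
    (hK : ∀ r, ∫⁻ ω, ENNReal.ofReal (‖row (W0 ω) r‖ ^ 2)⁻¹ ∂P ≤ ENNReal.ofReal K)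
    (hB : 0 < B) (hWB : ∀ᵐ ω ∂P, ‖W ω - W0 ω‖ ≤ B) (hm : 0 < m) :
    ∫⁻ ω, ENNReal.ofReal (∑ r, ‖row (W ω - W0 ω) r‖ / ‖row (W0 ω) r‖) ∂P ≤
      ENNReal.ofReal ((1 + K) / 2 * B * √m) := by
  -- the weight that balances the two terms of Young's inequality
  set a : ℝ := √m / B
  have ha : 0 < a := by positivity
  have hrowm : ∀ r, Measurable fun ω => ENNReal.ofReal (‖row (W0 ω) r‖ ^ 2)⁻¹ := fun r =>
    (((continuous_row r).measurable.comp hW0).norm.pow_const 2).inv.ennreal_ofReal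
  have hpt : ∀ᵐ ω ∂P, ENNReal.ofReal (∑ r, ‖row (W ω - W0 ω) r‖ / ‖row (W0 ω) r‖) ≤
      ENNReal.ofReal (a * B ^ 2 / 2) +
        ENNReal.ofReal (2 * a)⁻¹ * ∑ r, ENNReal.ofReal (‖row (W0 ω) r‖ ^ 2)⁻¹ := by
    filter_upwards [hWB] with ω hω
    rw [← ENNReal.ofReal_sum_of_nonneg fun r _ => by positivity,
      ← ENNReal.ofReal_mul (by positivity), ← ENNReal.ofReal_add (by positivity) (by positivity)]
    exact ENNReal.ofReal_le_ofReal (sum_div_norm_row_le hω ha)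
  calc _ ≤ ∫⁻ ω, ENNReal.ofReal (a * B ^ 2 / 2) +
          ENNReal.ofReal (2 * a)⁻¹ * ∑ r, ENNReal.ofReal (‖row (W0 ω) r‖ ^ 2)⁻¹ ∂P :=
        lintegral_mono_ae hpt
    _ = ENNReal.ofReal (a * B ^ 2 / 2) + ENNReal.ofReal (2 * a)⁻¹ *
          ∑ r, ∫⁻ ω, ENNReal.ofReal (‖row (W0 ω) r‖ ^ 2)⁻¹ ∂P := by
        rw [lintegral_add_left measurable_const, lintegral_const, measure_univ, mul_one,
          lintegral_const_mul _ (Finset.measurable_sum _ fun r _ => hrowm r),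
          lintegral_finsetSum _ fun r _ => hrowm r]
    _ ≤ ENNReal.ofReal (a * B ^ 2 / 2) + ENNReal.ofReal (2 * a)⁻¹ * (m * ENNReal.ofReal K) := by
        gcongr
        exact (Finset.sum_le_sum fun r _ => hK r).trans_eq (by simp)
    _ = ENNReal.ofReal ((1 + K) / 2 * B * √m) := by
        rw [← ENNReal.ofReal_natCast, ← ENNReal.ofReal_mul (by positivity),
          ← ENNReal.ofReal_mul (by positivity),
          ← ENNReal.ofReal_add (by positivity) (by positivity)]
        congr 1
        have hsm : √m ^ 2 = (m : ℝ) := Real.sq_sqrt (Nat.cast_nonneg m)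
        simp only [a]
        field_simp
        rw [hsm]
        ring

lemma sum_measure_flip_le [IsProbabilityMeasure P] (hW0 : Measurable W0) (hW : Measurable W)
    (hX : Measurable X) (hind : IndepFun (fun ω => (W0 ω, W ω)) X P)
    (hanti : ∀ v : Vec d, ‖v‖ = 1 → ∀ ζ : ℝ, 0 < ζ →
      P {ω | |⟪X ω, v⟫| ≤ ζ} ≤ ENNReal.ofReal (c * ζ))
    (hrow : ∀ r, ∀ᵐ ω ∂P, row (W0 ω) r ≠ 0) (hK0 : 0 ≤ K)
    (hK : ∀ r, ∫⁻ ω, ENNReal.ofReal (‖row (W0 ω) r‖ ^ 2)⁻¹ ∂P ≤ ENNReal.ofReal K)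
    (hB : 0 < B) (hWB : ∀ᵐ ω ∂P, ‖W ω - W0 ω‖ ≤ B) (hm : 0 < m) (hc : 0 ≤ c) :
    ∑ r, P {ω | |npre (W0 ω) (X ω) r| ≤ ‖row (W ω - W0 ω) r‖} ≤
      ENNReal.ofReal (c * ((1 + K) / 2 * B * √m)) := by
  have hratio : ∀ r, Measurable fun ω => ‖row (W ω - W0 ω) r‖ / ‖row (W0 ω) r‖ := fun r =>
    ((continuous_row r).measurable.comp (hW.sub hW0)).norm.div
      ((continuous_row r).measurable.comp hW0).norm
  calc _ ≤ ∑ r, ∫⁻ ω, ENNReal.ofReal (c * ‖row (W ω - W0 ω) r‖ / ‖row (W0 ω) r‖) ∂P := by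
        refine Finset.sum_le_sum fun r _ => ?_
        simp_rw [npre_eq_inner]
        exact measure_abs_inner_le_le_lintegral (Y := fun ω => (W0 ω, W ω))
          (u := fun z => row z.1 r) (t := fun z => ‖row (z.2 - z.1) r‖) (hW0.prodMk hW) hX hind
          ((continuous_row r).measurable.comp measurable_fst)
          ((continuous_row r).measurable.comp (measurable_snd.sub measurable_fst)).norm
          (hrow r) hanti
    _ = ENNReal.ofReal c *
          ∫⁻ ω, ENNReal.ofReal (∑ r, ‖row (W ω - W0 ω) r‖ / ‖row (W0 ω) r‖) ∂P := by
        have hconst : ∀ r, ∫⁻ ω, ENNReal.ofReal (c * ‖row (W ω - W0 ω) r‖ / ‖row (W0 ω) r‖) ∂P =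
            ENNReal.ofReal c *
              ∫⁻ ω, ENNReal.ofReal (‖row (W ω - W0 ω) r‖ / ‖row (W0 ω) r‖) ∂P := fun r => by
          simp_rw [mul_div_assoc, ENNReal.ofReal_mul hc]
          exact lintegral_const_mul _ (hratio r).ennreal_ofReal
        simp_rw [hconst, ← Finset.mul_sum,
          ENNReal.ofReal_sum_of_nonneg fun r _ => div_nonneg (norm_nonneg _) (norm_nonneg _)]
        rw [lintegral_finsetSum _ fun r _ => (hratio r).ennreal_ofReal]
    _ ≤ ENNReal.ofReal (c * ((1 + K) / 2 * B * √m)) := by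
        rw [ENNReal.ofReal_mul hc]
        gcongr
        exact lintegral_sum_div_norm_row_le hW0 hK0 hK hB hWB hm

lemma lintegral_inv_norm_row_sq_le (hW0 : Measurable W0)
    (hind : iIndepFun (fun p ω => W0 ω p) P) (hv : v ≠ 0)
    (hlaw : ∀ p, P.map (fun ω => W0 ω p) = gaussianReal μ v) (r : Fin m) :
    ∫⁻ ω, ENNReal.ofReal (‖row (W0 ω) r‖ ^ 2)⁻¹ ∂P ≤ invSqMomentBound d μ v := by
  have h := lintegral_inv_sum_sq_le (Y := fun i ω => W0 ω (r, i)) (fun i => by fun_prop)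
    (hind.precomp (Prod.mk_right_injective r)) hv fun i => hlaw (r, i)
  simpa [EuclideanSpace.real_norm_sq_eq, row] using h

lemma ae_row_ne_zero (hW0 : Measurable W0) (hv : v ≠ 0)
    (hlaw : ∀ p, P.map (fun ω => W0 ω p) = gaussianReal μ v) (hd : 0 < d) (r : Fin m) :
    ∀ᵐ ω ∂P, row (W0 ω) r ≠ 0 := by
  filter_upwards [ae_ne_of_map_eq_gaussianReal (by fun_prop) hv (hlaw (r, ⟨0, hd⟩)) 0]
    with ω hω hrow
  exact hω (by simpa [row] using congrArg (· ⟨0, hd⟩) hrow)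

end RandomNetwork

/-- Error of local linearization of two-layer ReLU networks (Lemma 1): for `d ≥ 3` and
under the random initialization of Assumption 1 (signs i.i.d. uniform on `{±1}`,
`W(0)` with i.i.d. `N(0,1/d)` coordinates, all independent; `X` independent of the
initialization, `‖X‖ ≤ 1` a.s. and `P(|vᵀX| ≤ ζ) ≤ cζ`), there is a constant `C`
depending only on `c` and `d` such that for every initialization-measurable `W ∈ S_B`
a.s.: `E_{init,X}|f(X;W) − f̂(X;W)|² ≤ C B³ m^{−1/2}` and
`E_{init,X}‖∇_W f(X;W) − ∇_W f(X;W(0))‖² ≤ C B m^{−1/2}`. -/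
theorem stmt_2 :
    ∀ (d : ℕ), 3 ≤ d → ∀ c : ℝ, 0 < c →
    ∃ C : ℝ, 0 < C ∧
    ∀ (m : ℕ), 0 < m → ∀ B : ℝ, 0 < B →
    ∀ (Ω : Type) [MeasurableSpace Ω] (P : Measure Ω), ∀ _hP : IsProbabilityMeasure P,
    ∀ (W0 : Ω → Wt m d) (ssign : Ω → Fin m → ℝ) (X : Ω → Vec d) (W : Ω → Wt m d),
    Measurable W0 → Measurable ssign → Measurable X →
    (∀ ω r, ssign ω r = 1 ∨ ssign ω r = -1) →
    (∀ r, P {ω | ssign ω r = 1} = 1 / 2) →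
    (∀ p : Fin m × Fin d,
      Measure.map (fun ω => W0 ω p) P = gaussianReal 0 ((d : NNReal))⁻¹) →
    @iIndepFun Ω ((Fin m × Fin d) ⊕ Fin m) _ (fun _ => ℝ)
      (fun _ : (Fin m × Fin d) ⊕ Fin m => (inferInstance : MeasurableSpace ℝ))
      (Sum.elim (fun p ω => W0 ω p) (fun r ω => ssign ω r)) P →
    IndepFun (fun ω => (W0 ω, ssign ω)) X P →
    (∀ᵐ ω ∂P, ‖X ω‖ ≤ 1) →
    (∀ v : Vec d, ‖v‖ = 1 → ∀ ζ : ℝ, 0 < ζ →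
      P {ω | |∑ i, v i * X ω i| ≤ ζ} ≤ ENNReal.ofReal (c * ζ)) →
    (@Measurable Ω (Wt m d)
      (MeasurableSpace.comap (fun ω => (W0 ω, ssign ω)) inferInstance) _ W) →
    (∀ᵐ ω ∂P, ‖W ω - W0 ω‖ ≤ B) →
    (∫ ω, (net (ssign ω) (W ω) (X ω) - netLin (ssign ω) (W0 ω) (W ω) (X ω)) ^ 2 ∂P
        ≤ C * B ^ 3 * (Real.sqrt m)⁻¹)
    ∧ (∫ ω, (∑ p : Fin m × Fin d,
             (netGrad (ssign ω) (W ω) (X ω) p - netGrad (ssign ω) (W0 ω) (X ω) p) ^ 2) ∂P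
        ≤ C * B * (Real.sqrt m)⁻¹) := by
  intro d hd c hc
  set K := (invSqMomentBound d 0 (d : ℝ≥0)⁻¹).toReal
  refine ⟨c * (1 + K) / 2, by positivity, ?_⟩
  intro m hm B hB Ω _ P _ W0 ssign X W hW0 hs hX hsign _ hlaw hiind hind hXnorm hanti hWcomap hWB
  have hv : ((d : ℝ≥0))⁻¹ ≠ 0 := by simp; omega
  have hW : Measurable W := hWcomap.mono (hW0.prodMk hs).comap_le le_rfl
  have hindW : IndepFun (fun ω => (W0 ω, W ω)) X P :=
    hind.of_measurable_comap ((measurable_fst.comp (comap_measurable _)).prodMk hWcomap)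
  have hmoment : ∀ r, ∫⁻ ω, ENNReal.ofReal (‖row (W0 ω) r‖ ^ 2)⁻¹ ∂P ≤ ENNReal.ofReal K :=
    fun r => (lintegral_inv_norm_row_sq_le hW0 (hiind.precomp Sum.inl_injective) hv hlaw r).trans_eq
      (ENNReal.ofReal_toReal (invSqMomentBound_ne_top hd hv)).symm
  have hflip : ∫ ω, flipCount (W0 ω) (W ω) (X ω) ∂P ≤ c * ((1 + K) / 2 * B * √m) := by
    rw [integral_flipCount hW0 hW hX]
    exact ENNReal.toReal_le_of_le_ofReal (by positivity) <|
      sum_measure_flip_le hW0 hW hX hindW (by simpa only [inner_eq_sum_mul] using hanti)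
        (ae_row_ne_zero hW0 hv hlaw (by omega)) ENNReal.toReal_nonneg hmoment hB hWB hm hc.le
  have habs : ∀ ω r, |ssign ω r| ≤ 1 := fun ω r => by rcases hsign ω r with h | h <;> simp [h]
  have hscale : (m : ℝ)⁻¹ * (c * ((1 + K) / 2 * B * √m)) = c * (1 + K) / 2 * B * (√m)⁻¹ := by
    rw [inv_eq_one_div √m, ← Real.sqrt_div_self']
    ring
  have hflipInt := integrable_flipCount (P := P) hW0 hW hX
  constructor
  · calc _ ≤ (m : ℝ)⁻¹ * B ^ 2 * (c * ((1 + K) / 2 * B * √m)) := by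
          refine integral_le_mul_of_ae_le_mul (ae_of_all _ fun ω => sq_nonneg _) hflipInt
            (by positivity) ?_ hflip
          filter_upwards [hXnorm, hWB] with ω hx hω
          refine (sq_net_sub_netLin_le (habs ω) _ _ hx).trans ?_
          gcongr
          exact flipCount_nonneg _ _ _
      _ = _ := by
          rw [mul_right_comm, hscale]
          ring
  · exact (integral_le_mul_of_ae_le_mul
      (ae_of_all _ fun ω => Finset.sum_nonneg fun p _ => sq_nonneg _) hflipInt (by positivity)
      (hXnorm.mono fun ω hx => sum_sq_netGrad_sub_le (habs ω) _ _ hx) hflip).trans_eq hscale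
end
end

section
/- Regularization bias under a source condition (Lemma 6): Suppose (φ_j)_{j∈ℕ} is a complete orthonormal system of H, (ψ_j)_{j∈ℕ} is an orthonormal system in E, and λ_j > 0 satisfy A φ_j = λ_j ψ_j and A* ψ_j = λ_j φ_j for all j. Let β > 0 and let f ∈ H satisfy M_β := Σ_{j} ⟨f, φ_j⟩²_H · λ_j^{−2β} < ∞, and set b = A f. Let f^α be the unique minimizer of L_α over H. Then there is a constant C depending only on β and ‖A‖ such that for all α > 0, ‖f − f^α‖²_H ≤ C · M_β · α^{min(β, 2)}. -/
open scoped RealInnerProductSpace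
open Real

lemma aux_pt {l N α β : ℝ} (hl : 0 < l) (hlN : l ≤ N) (hα : 0 < α) (hβ : 0 < β) :
    (α / (l ^ 2 + α)) ^ 2 ≤ max 1 (N ^ (2 * β - 4)) * l ^ (-(2 * β)) * α ^ min β 2 := by
  have hs : 0 < l ^ 2 + α := by positivity
  have hL : (0:ℝ) < l ^ (2 * β) := rpow_pos_of_pos hl _
  have hlneg : l ^ (-(2 * β)) = (l ^ (2 * β))⁻¹ := rpow_neg hl.le _
  set C := max 1 (N ^ (2 * β - 4)) with hC
  have main : α ^ 2 * l ^ (2 * β) ≤ C * α ^ min β 2 * (l ^ 2 + α) ^ 2 := by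
    rcases le_total β 2 with h2 | h2
    · rw [min_eq_left h2]
      have hC1 : (1:ℝ) ≤ C := le_max_left _ _
      have key : α ^ 2 * l ^ (2 * β) ≤ α ^ β * (l ^ 2 + α) ^ 2 := by
        have e1 : (α:ℝ) ^ 2 = α ^ β * α ^ (2 - β) := by
          rw [← rpow_natCast α 2, ← rpow_add hα]; norm_num
        have e2 : ((l ^ 2 + α):ℝ) ^ 2 = (l ^ 2 + α) ^ β * (l ^ 2 + α) ^ (2 - β) := by
          rw [← rpow_natCast (l ^ 2 + α) 2, ← rpow_add hs]; norm_num
        have e3 : l ^ (2 * β) = (l ^ 2) ^ β := by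
          rw [← rpow_natCast l 2, ← rpow_mul hl.le]; norm_num
        rw [e1, e2, e3]
        calc α ^ β * α ^ (2 - β) * (l ^ 2) ^ β
            = α ^ β * ((l ^ 2) ^ β * α ^ (2 - β)) := by ring
          _ ≤ α ^ β * ((l ^ 2 + α) ^ β * (l ^ 2 + α) ^ (2 - β)) := by
              gcongr <;> nlinarith [hα.le, sq_nonneg l]
      calc α ^ 2 * l ^ (2 * β) ≤ α ^ β * (l ^ 2 + α) ^ 2 := key
        _ = 1 * (α ^ β * (l ^ 2 + α) ^ 2) := by ring
        _ ≤ C * (α ^ β * (l ^ 2 + α) ^ 2) := by gcongr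
        _ = C * α ^ β * (l ^ 2 + α) ^ 2 := by ring
    · rw [min_eq_right h2, rpow_two]
      have hCge : N ^ (2 * β - 4) ≤ C := le_max_right _ _
      have e4 : l ^ (2 * β) = l ^ (2 * β - 4) * l ^ 4 := by
        rw [← rpow_natCast l 4, ← rpow_add hl]; norm_num
      have h6 : l ^ (2 * β - 4) ≤ N ^ (2 * β - 4) :=
        rpow_le_rpow hl.le hlN (by linarith)
      have h7 : l ^ 4 ≤ (l ^ 2 + α) ^ 2 := by nlinarith [sq_nonneg l, hα.le]
      calc α ^ 2 * l ^ (2 * β) = α ^ 2 * (l ^ (2 * β - 4) * l ^ 4) := by rw [e4]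
        _ ≤ α ^ 2 * (C * (l ^ 2 + α) ^ 2) := by
            gcongr
            exact h6.trans hCge
        _ = C * α ^ 2 * (l ^ 2 + α) ^ 2 := by ring
  rw [div_pow, hlneg, div_le_iff₀ (by positivity)]
  calc α ^ 2 = (α ^ 2 * l ^ (2 * β)) * (l ^ (2 * β))⁻¹ := by field_simp
    _ ≤ (C * α ^ min β 2 * (l ^ 2 + α) ^ 2) * (l ^ (2 * β))⁻¹ := by gcongr
    _ = C * (l ^ (2 * β))⁻¹ * α ^ min β 2 * (l ^ 2 + α) ^ 2 := by ring

/-- Regularization bias under a source condition (Lemma 6): if `(λ_j, φ_j, ψ_j)` is a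
singular system of `A` with `(φ_j)` a complete orthonormal system, `f` satisfies the
source condition `M_β = Σ_j ⟪f, φ_j⟫² λ_j^{−2β} < ∞`, `b = A f`, and `f^α` minimizes the
Tikhonov functional, then `‖f − f^α‖² ≤ C M_β α^{min(β,2)}` with `C` depending only on
`β` and `‖A‖` (i.e. uniform in `f`, `M_β`, `α`, `f^α`). -/
theorem stmt_12
    {H E : Type*} [NormedAddCommGroup H] [InnerProductSpace ℝ H] [CompleteSpace H]
    [NormedAddCommGroup E] [InnerProductSpace ℝ E] [CompleteSpace E]
    (A : H →L[ℝ] E) (φ : ℕ → H) (ψ : ℕ → E) (lam : ℕ → ℝ)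
    (hφ : Orthonormal ℝ φ)
    (hφcomplete : (Submodule.span ℝ (Set.range φ)).topologicalClosure = ⊤)
    (hψ : Orthonormal ℝ ψ)
    (hlam : ∀ j, 0 < lam j)
    (hAφ : ∀ j, A (φ j) = lam j • ψ j)
    (hAψ : ∀ j, (ContinuousLinearMap.adjoint A) (ψ j) = lam j • φ j)
    (β : ℝ) (hβ : 0 < β) :
    ∃ C : ℝ, 0 < C ∧
      ∀ (f : H) (Mβ : ℝ),
        Summable (fun j => ⟪f, φ j⟫ ^ 2 * lam j ^ (-(2 * β))) →
        Mβ = ∑' j, ⟪f, φ j⟫ ^ 2 * lam j ^ (-(2 * β)) →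
        ∀ (α : ℝ), 0 < α →
          ∀ fα : H,
            (∀ g : H,
              (1 / 2) * ‖A fα - A f‖ ^ 2 + (α / 2) * ‖fα‖ ^ 2
                ≤ (1 / 2) * ‖A g - A f‖ ^ 2 + (α / 2) * ‖g‖ ^ 2) →
            ‖f - fα‖ ^ 2 ≤ C * Mβ * α ^ min β 2 := by
  have hlamN : ∀ j, lam j ≤ ‖A‖ := by
    intro j
    have h1 : ‖A (φ j)‖ = lam j := by
      rw [hAφ j, norm_smul, hψ.1 j, mul_one, Real.norm_eq_abs, abs_of_pos (hlam j)]
    have h2 := A.le_opNorm (φ j)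
    rw [h1, hφ.1 j, mul_one] at h2
    exact h2
  refine ⟨max 1 (‖A‖ ^ (2 * β - 4)), lt_of_lt_of_le one_pos (le_max_left _ _), ?_⟩
  set C := max 1 (‖A‖ ^ (2 * β - 4)) with hCdef
  intro f Mβ hsum hMβ α hα fα hmin
  set m := min β 2 with hm
  -- first-order condition gives the coordinates of fα
  have hcoord : ∀ j, ⟪f - fα, φ j⟫ = ⟪f, φ j⟫ * (α / (lam j ^ 2 + α)) := by
    intro j
    set D : ℝ := (1/2) * ‖A (φ j)‖ ^ 2 + α / 2 with hDdef
    have hD : 0 < D := by rw [hDdef]; positivity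
    set B : ℝ := ⟪A fα - A f, A (φ j)⟫ + α * ⟪fα, φ j⟫ with hBdef
    have hq : ∀ t : ℝ, 0 ≤ t * B + t ^ 2 * D := by
      intro t
      have h := hmin (fα + t • φ j)
      have e1 : A (fα + t • φ j) - A f = (A fα - A f) + t • A (φ j) := by
        rw [map_add, map_smul]; abel
      have e2 : ‖(A fα - A f) + t • A (φ j)‖ ^ 2
          = ‖A fα - A f‖ ^ 2 + 2 * (t * ⟪A fα - A f, A (φ j)⟫) + t ^ 2 * ‖A (φ j)‖ ^ 2 := by
        rw [norm_add_sq_real, real_inner_smul_right, norm_smul]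
        simp [Real.norm_eq_abs, mul_pow, sq_abs]
      have e3 : ‖fα + t • φ j‖ ^ 2
          = ‖fα‖ ^ 2 + 2 * (t * ⟪fα, φ j⟫) + t ^ 2 := by
        rw [norm_add_sq_real, real_inner_smul_right, norm_smul, hφ.1 j]
        simp [Real.norm_eq_abs, mul_pow, sq_abs]
      rw [e1, e2, e3] at h
      rw [hBdef, hDdef]
      nlinarith [h]
    have hB0 : B = 0 := by
      have h1 := hq (-(B / (2 * D)))
      have h2 : (-(B / (2 * D))) * B + (-(B / (2 * D))) ^ 2 * D = -(B ^ 2) / (4 * D) := by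
        field_simp
        ring
      rw [h2] at h1
      have h3 : (0:ℝ) ≤ -(B ^ 2) := by
        have h4 := mul_nonneg h1 (le_of_lt (by positivity : (0:ℝ) < 4 * D))
        rwa [div_mul_cancel₀ _ (by positivity : (4:ℝ) * D ≠ 0)] at h4
      have h5 : B ^ 2 = 0 := le_antisymm (by linarith) (sq_nonneg B)
      exact (pow_eq_zero_iff two_ne_zero).mp h5
    have eB : ⟪A fα - A f, A (φ j)⟫ = lam j ^ 2 * (⟪fα, φ j⟫ - ⟪f, φ j⟫) := by
      rw [hAφ j, real_inner_smul_right, ← map_sub, ← ContinuousLinearMap.adjoint_inner_right,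
        hAψ j, real_inner_smul_right, inner_sub_left]
      ring
    rw [hBdef, eB] at hB0
    have hne : lam j ^ 2 + α ≠ 0 := ne_of_gt (by positivity)
    rw [inner_sub_left]
    field_simp
    linear_combination -hB0
  -- Parseval
  let b : HilbertBasis ℕ ℝ H := HilbertBasis.mk hφ hφcomplete.ge
  have hbc : ⇑b = φ := HilbertBasis.coe_mk _ _
  have hP : HasSum (fun j => ⟪f - fα, φ j⟫ ^ 2) (‖f - fα‖ ^ 2) := by
    have h := b.hasSum_inner_mul_inner (f - fα) (f - fα)
    rw [real_inner_self_eq_norm_sq] at h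
    have heq : (fun j => ⟪f - fα, φ j⟫ ^ 2)
        = fun j => ⟪f - fα, b j⟫ * ⟪b j, f - fα⟫ := by
      funext j
      rw [hbc, real_inner_comm (φ j) (f - fα)]
      ring
    rwa [heq]
  -- pointwise comparison and summation
  have key : ∀ j, ⟪f - fα, φ j⟫ ^ 2 ≤ C * α ^ m * (⟪f, φ j⟫ ^ 2 * lam j ^ (-(2 * β))) := by
    intro j
    rw [hcoord j, mul_pow]
    calc ⟪f, φ j⟫ ^ 2 * (α / (lam j ^ 2 + α)) ^ 2
        ≤ ⟪f, φ j⟫ ^ 2 * (C * lam j ^ (-(2 * β)) * α ^ m) :=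
          mul_le_mul_of_nonneg_left (aux_pt (hlam j) (hlamN j) hα hβ) (sq_nonneg _)
      _ = C * α ^ m * (⟪f, φ j⟫ ^ 2 * lam j ^ (-(2 * β))) := by ring
  calc ‖f - fα‖ ^ 2 = ∑' j, ⟪f - fα, φ j⟫ ^ 2 := hP.tsum_eq.symm
    _ ≤ ∑' j, C * α ^ m * (⟪f, φ j⟫ ^ 2 * lam j ^ (-(2 * β))) :=
        Summable.tsum_le_tsum key hP.summable (hsum.mul_left _)
    _ = C * α ^ m * ∑' j, ⟪f, φ j⟫ ^ 2 * lam j ^ (-(2 * β)) := tsum_mul_left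
    _ = C * Mβ * α ^ m := by rw [hMβ]; ring
end
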